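/- If j = j(n) → ∞ with j/n → ρ for fixed 0 < ρ < 1, then for each m ≥ 0 the probability P{Y_{n,j} = m} converges to ρ^{k/(k+1)}(1-ρ^{k/(k+1)})^m, i.e., Y_{n,j} converges in distribution to a geometric distribution with success probability ρ^{k/(k+1)}. -/

import Mathlib

/-!
Cancelling factorials, `P{Y_{n,j} = m} = ∑_ℓ C(m,ℓ) (-1)^ℓ ∏_{j<i≤n} (i - β_ℓ)/(i - α)` with
`α = k/(k+1)` and `β_ℓ = (2+ℓ)α`. Each product is a quotient of Gamma values, and Euler's limit
formula gives `Γ(x + a)/Γ(x + b) ~ x^(a-b)`, so the product tends to `ρ^(β_ℓ - α) = (ρ^α)^(1+ℓ)`.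
The binomial theorem sums these limits to `ρ^α (1 - ρ^α)^m`.
-/

open Filter

/-- Generalized binomial coefficient `binom(x, n) = x(x-1)⋯(x-n+1)/n!`. -/
noncomputable def gbinom (x : ℝ) (n : ℕ) : ℝ :=
  (∏ i ∈ Finset.range n, (x - i)) / (Nat.factorial n)

/-- `P{Y_{n,j} = m}`: the exact distribution of the out-degree of node `j` in a
random ordered increasing `k`-tree of size `n`. -/
noncomputable def Pdeg (k n j m : ℕ) : ℝ :=
  gbinom ((j : ℝ) - k / (k + 1)) j
    / (gbinom ((n : ℝ) - k / (k + 1)) n * (Nat.choose n j : ℝ))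
    * ∑ ℓ ∈ Finset.range (m + 1),
        (Nat.choose m ℓ : ℝ) * (-1) ^ ℓ * gbinom ((n : ℝ) - (k : ℝ) * (2 + ℓ) / (k + 1)) (n - j)

open Finset Real

lemma prod_range_div_mul_rpow_eq_GammaSeq_div {a b : ℝ} (ha : 0 < a) (hb : 0 < b) {N : ℕ}
    (hN : N ≠ 0) :
    (∏ i ∈ range N, (a + i) / (b + i)) * (N : ℝ) ^ (b - a)
      = GammaSeq b N / GammaSeq a N * ((b + N) / (a + N)) := by
  have hN' : (0 : ℝ) < N := by exact_mod_cast Nat.pos_of_ne_zero hN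
  have hpos (s : ℝ) (hs : 0 < s) : 0 < ∏ i ∈ range N, (s + i) :=
    prod_pos fun i _ => by positivity
  rw [GammaSeq, GammaSeq, prod_range_succ, prod_range_succ, prod_div_distrib,
    rpow_sub hN']
  have := hpos a ha
  have := hpos b hb
  have : (0 : ℝ) < N.factorial := by exact_mod_cast Nat.factorial_pos N
  have : 0 < (N : ℝ) ^ a := by positivity
  have : 0 < (N : ℝ) ^ b := by positivity
  field_simp

lemma tendsto_prod_range_div_mul_rpow {a b : ℝ} (ha : 0 < a) (hb : 0 < b) :
    Tendsto (fun N : ℕ => (∏ i ∈ range N, (a + i) / (b + i)) * (N : ℝ) ^ (b - a)) atTop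
      (nhds (Gamma b / Gamma a)) := by
  have hlim := ((GammaSeq_tendsto_Gamma b).div (GammaSeq_tendsto_Gamma a)
    (Gamma_pos_of_pos ha).ne').mul (tendsto_add_mul_div_add_mul_atTop_nhds b a 1 one_ne_zero)
  rw [div_one, mul_one] at hlim
  refine hlim.congr' ?_
  filter_upwards [eventually_ne_atTop 0] with N hN
  rw [prod_range_div_mul_rpow_eq_GammaSeq_div ha hb hN]
  simp

lemma tendsto_prod_range_div_prod_range {a b ρ : ℝ} (ha : 0 < a) (hb : 0 < b) (hρ : 0 < ρ)
    {u v : ℕ → ℕ} (hu : Tendsto u atTop atTop) (hv : Tendsto v atTop atTop)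
    (huv : Tendsto (fun n => (u n : ℝ) / v n) atTop (nhds ρ)) :
    Tendsto (fun n => (∏ i ∈ range (v n), (a + i) / (b + i)) /
      ∏ i ∈ range (u n), (a + i) / (b + i)) atTop (nhds (ρ ^ (b - a))) := by
  have hC : Gamma b / Gamma a ≠ 0 := (div_pos (Gamma_pos_of_pos hb) (Gamma_pos_of_pos ha)).ne'
  have hlim := (((tendsto_prod_range_div_mul_rpow ha hb).comp hv).div
    ((tendsto_prod_range_div_mul_rpow ha hb).comp hu) hC).mul
    (huv.rpow_const (p := b - a) (.inl hρ.ne'))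
  rw [div_self hC, one_mul] at hlim
  refine hlim.congr' ?_
  filter_upwards [hu.eventually_gt_atTop 0, hv.eventually_gt_atTop 0] with n hun hvn
  have hQ : 0 < ∏ i ∈ range (u n), (a + i) / (b + i) := prod_pos fun i _ => by positivity
  have : (0 : ℝ) < u n := by exact_mod_cast hun
  have : (0 : ℝ) < v n := by exact_mod_cast hvn
  have : (0 : ℝ) < (u n : ℝ) ^ (b - a) := by positivity
  have : (0 : ℝ) < (v n : ℝ) ^ (b - a) := by positivity
  rw [Pi.div_apply, Function.comp_apply, Function.comp_apply,
    div_rpow (by positivity) (by positivity)]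
  field_simp

lemma prod_range_add_div_prod_range {a b : ℝ} (ha : 0 < a) (hb : 0 < b) (N K : ℕ) :
    (∏ i ∈ range (N + K), (a + i) / (b + i)) / ∏ i ∈ range N, (a + i) / (b + i)
      = ∏ t ∈ range K, (a + N + t) / (b + N + t) := by
  have hQ : 0 < ∏ i ∈ range N, (a + i) / (b + i) := prod_pos fun i _ => by positivity
  rw [prod_range_add, mul_div_cancel_left₀ _ hQ.ne']
  push_cast
  simp only [add_assoc]

lemma tendsto_natCast_sub_div_natCast_sub {j : ℕ → ℕ} {ρ : ℝ}
    (hj : Tendsto (fun n => (j n : ℝ) / n) atTop (nhds ρ)) (hjinf : Tendsto j atTop atTop)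
    (M : ℕ) : Tendsto (fun n => ((j n - M : ℕ) : ℝ) / (n - M : ℕ)) atTop (nhds ρ) := by
  have hM := tendsto_const_div_atTop_nhds_zero_nat (M : ℝ)
  have hlim := (hj.sub hM).div (tendsto_const_nhds.sub hM) (by norm_num : (1 : ℝ) - 0 ≠ 0)
  rw [sub_zero, sub_zero, div_one] at hlim
  refine hlim.congr' ?_
  filter_upwards [hjinf.eventually_ge_atTop M, eventually_gt_atTop M] with n hjn hn
  have : (0 : ℝ) < n := by exact_mod_cast (Nat.zero_le M).trans_lt hn
  rw [Pi.div_apply, Nat.cast_sub hjn, Nat.cast_sub hn.le]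
  field_simp

lemma tendsto_prod_range_sub_div {c d ρ : ℝ} {j : ℕ → ℕ} (hρ : 0 < ρ)
    (hjn : ∀ᶠ n in atTop, j n ≤ n) (hj : Tendsto (fun n => (j n : ℝ) / n) atTop (nhds ρ))
    (hjinf : Tendsto j atTop atTop) :
    Tendsto (fun n => ∏ t ∈ range (n - j n), (c + j n + t) / (d + j n + t)) atTop
      (nhds (ρ ^ (d - c))) := by
  -- Euler's formula needs Pochhammer products with positive arguments, so start them at `M`.
  obtain ⟨M, hM⟩ := exists_nat_gt (max (-c) (-d))
  have ha : 0 < c + M := by linarith [le_max_left (-c) (-d)]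
  have hb : 0 < d + M := by linarith [le_max_right (-c) (-d)]
  have hlim := tendsto_prod_range_div_prod_range ha hb hρ
    ((tendsto_sub_atTop_nat M).comp hjinf) (tendsto_sub_atTop_nat M)
    (tendsto_natCast_sub_div_natCast_sub hj hjinf M)
  rw [add_sub_add_right_eq_sub] at hlim
  refine hlim.congr' ?_
  filter_upwards [hjinf.eventually_ge_atTop M, hjn] with n hMj hjn
  simp only [Function.comp_apply]
  rw [show n - M = (j n - M) + (n - j n) by omega, prod_range_add_div_prod_range ha hb,
    Nat.cast_sub hMj]
  refine prod_congr rfl fun t _ => ?_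
  ring_nf

lemma gbinom_eq_prod_add (x : ℝ) (N : ℕ) :
    gbinom x N = (∏ i ∈ range N, (x - N + 1 + i)) / N.factorial := by
  rw [gbinom, ← prod_range_reflect (fun i : ℕ => x - N + 1 + i)]
  congr 1
  refine prod_congr rfl fun i hi => ?_
  rw [Nat.sub_sub, Nat.cast_sub (by rw [mem_range] at hi; omega)]
  push_cast
  ring

lemma gbinom_sub_div_mul_gbinom {α β : ℝ} (hα : α < 1) {n j : ℕ} (hjn : j ≤ n) :
    gbinom (j - α) j / (gbinom (n - α) n * n.choose j) * gbinom (n - β) (n - j)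
      = ∏ t ∈ range (n - j), (1 - β + j + t) / (1 - α + j + t) := by
  have hrising (N : ℕ) : gbinom (N - α) N = (∏ i ∈ range N, (1 - α + i)) / N.factorial := by
    rw [gbinom_eq_prod_add]
    congr 1
    exact prod_congr rfl fun i _ => by ring
  have hsplit : ∏ i ∈ range n, (1 - α + i)
      = (∏ i ∈ range j, (1 - α + i)) * ∏ t ∈ range (n - j), (1 - α + j + t) := by
    conv_lhs => rw [← Nat.add_sub_cancel' hjn, prod_range_add]
    push_cast
    simp only [add_assoc]
  have htail : gbinom (n - β) (n - j)
      = (∏ t ∈ range (n - j), (1 - β + j + t)) / (n - j).factorial := by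
    rw [gbinom_eq_prod_add, Nat.cast_sub hjn]
    congr 1
    exact prod_congr rfl fun t _ => by ring
  have hfact : (n.factorial : ℝ) = n.choose j * j.factorial * (n - j).factorial := by
    exact_mod_cast (Nat.choose_mul_factorial_mul_factorial hjn).symm
  have hpos (s : ℝ) (hs : 0 < s) (N : ℕ) : 0 < ∏ i ∈ range N, (s + i) :=
    prod_pos fun i _ => by positivity
  have := hpos (1 - α) (by linarith) j
  have := hpos (1 - α + j) (by positivity) (n - j)
  have : (0 : ℝ) < n.choose j := by exact_mod_cast Nat.choose_pos hjn
  rw [hrising, hrising, hsplit, htail, hfact, prod_div_distrib]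
  field_simp

lemma Pdeg_eq_sum_prod (k : ℕ) {n j : ℕ} (hjn : j ≤ n) (m : ℕ) :
    Pdeg k n j m = ∑ ℓ ∈ range (m + 1), (m.choose ℓ : ℝ) * (-1) ^ ℓ *
      ∏ t ∈ range (n - j),
        (1 - (k : ℝ) * (2 + ℓ) / (k + 1) + j + t) / (1 - (k : ℝ) / (k + 1) + j + t) := by
  have hα : (k : ℝ) / (k + 1) < 1 := by rw [div_lt_one (by positivity)]; linarith
  rw [Pdeg, mul_sum]
  refine sum_congr rfl fun ℓ _ => ?_
  rw [mul_left_comm, gbinom_sub_div_mul_gbinom hα hjn]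

lemma sum_choose_mul_neg_one_pow_mul_pow {R : Type*} [CommRing R] (x : R) (m : ℕ) :
    ∑ ℓ ∈ range (m + 1), (m.choose ℓ : R) * (-1) ^ ℓ * (x * x ^ ℓ) = x * (1 - x) ^ m := by
  rw [sub_eq_neg_add, add_pow, mul_sum]
  refine sum_congr rfl fun ℓ _ => ?_
  rw [neg_pow]
  ring

lemma eventually_le_of_tendsto_div_lt_one {j : ℕ → ℕ} {ρ : ℝ} (hρ : ρ < 1)
    (hj : Tendsto (fun n => (j n : ℝ) / n) atTop (nhds ρ)) : ∀ᶠ n in atTop, j n ≤ n := by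
  filter_upwards [hj.eventually_lt_const hρ, eventually_gt_atTop 0] with n hlt hn
  have hn' : (0 : ℝ) < n := by exact_mod_cast hn
  exact_mod_cast ((div_lt_one hn').mp hlt).le

theorem ktree_outdegree_central (k : ℕ) (j : ℕ → ℕ) (ρ : ℝ)
    (hρ0 : 0 < ρ) (hρ1 : ρ < 1)
    (hj : Tendsto (fun n : ℕ => (j n : ℝ) / n) atTop (nhds ρ))
    (hjinf : Tendsto j atTop atTop) (m : ℕ) :
    Tendsto (fun n : ℕ => Pdeg k n (j n) m) atTop
      (nhds (ρ ^ ((k : ℝ) / ((k : ℝ) + 1)) * (1 - ρ ^ ((k : ℝ) / ((k : ℝ) + 1))) ^ m)) := by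
  set α : ℝ := k / (k + 1) with hα
  have hjn := eventually_le_of_tendsto_div_lt_one hρ1 hj
  have hterm (ℓ : ℕ) : Tendsto (fun n => ∏ t ∈ range (n - j n),
      (1 - k * (2 + ℓ) / (k + 1) + j n + t) / (1 - α + j n + t)) atTop
      (nhds (ρ ^ α * (ρ ^ α) ^ ℓ)) := by
    convert tendsto_prod_range_sub_div hρ0 hjn hj hjinf using 2
    rw [← rpow_natCast, ← rpow_mul hρ0.le, ← rpow_add hρ0, hα]
    ring_nf
  have hsum := tendsto_finsetSum (range (m + 1)) fun ℓ _ =>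
    (hterm ℓ).const_mul ((m.choose ℓ : ℝ) * (-1) ^ ℓ)
  rw [sum_choose_mul_neg_one_pow_mul_pow] at hsum
  refine hsum.congr' ?_
  filter_upwards [hjn] with n hn
  rw [Pdeg_eq_sum_prod k hn]
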